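/- arXiv:2201.01979 — 2 statements merged into one kernel-verified Lean document; each statement's English description precedes it below -/
import Mathlib

section
/- Let A be a commutative ring, f ∈ A, and M an A-module that is f-adically separated and complete (i.e. M ≅ lim_n M/f^n M) and has bounded f-power torsion. Then M is derived f-complete: Hom_A(A_f, M) = 0 and Ext^1_A(A_f, M) = 0. -/
open CategoryTheory

/-- Derived `f`-completeness of an `A`-module `M`:
`Hom_A(A_f, M) = 0` and `Ext¹_A(A_f, M) = 0`, where `A_f` is the localization at `f`. -/
def DerivedFComplete (A : Type) [CommRing A] (f : A) (M : Type) [AddCommGroup M]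
    [Module A M] : Prop :=
  (∀ φ : Localization.Away f →ₗ[A] M, φ = 0) ∧
    Subsingleton (((Ext A (ModuleCat.{0} A) 1).obj
      (Opposite.op (ModuleCat.of A (Localization.Away f)))).obj (ModuleCat.of A M))

/-!
The localization `A_f` has the free resolution `0 → ⊕ℕ A → ⊕ℕ A → A_f → 0` given by
`eₙ ↦ eₙ - f • eₙ₊₁` and `eₙ ↦ f⁻ⁿ`, so `Ext¹(A_f, M)` is the cokernel of the map
`M^ℕ → M^ℕ`, `(mₙ) ↦ (mₙ - f • mₙ₊₁)`. When `M` is `f`-adically complete this map is onto: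
`mₙ = ∑ₖ fᵏ • yₙ₊ₖ` converges and solves `mₙ - f • mₙ₊₁ = yₙ`. A map `A_f → M` has its image
in `⋂ₙ fⁿ M`, which vanishes because `M` is `f`-adically separated.
-/

section AdicSeries

variable {R M : Type*} [CommRing R] [AddCommGroup M] [Module R M] {I : Ideal R}

lemma pow_smul_mem_pow_smul_top {r : R} (hr : r ∈ I) {j k : ℕ} (hjk : j ≤ k) (m : M) :
    r ^ k • m ∈ (I ^ j • ⊤ : Submodule R M) :=
  Submodule.smul_mem_smul (Ideal.pow_le_pow_right hjk (Ideal.pow_mem_pow hr k)) Submodule.mem_top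

theorem IsAdicComplete.exists_eq_add_smul_succ [IsAdicComplete I M] {r : R} (hr : r ∈ I)
    (y : ℕ → M) : ∃ L : ℕ → M, ∀ n, L n = y n + r • L (n + 1) := by
  set S : ℕ → ℕ → M := fun n j => ∑ k ∈ Finset.range j, r ^ k • y (n + k) with hSdef
  have hS : ∀ n j, S n (j + 1) = y n + r • S (n + 1) j := by
    intro n j
    simp only [hSdef, Finset.sum_range_succ', Finset.smul_sum, smul_smul, ← pow_succ']
    simp only [pow_zero, one_smul, add_zero, add_comm, add_left_comm]
  have hcauchy : ∀ n {a b : ℕ}, a ≤ b → S n a ≡ S n b [SMOD (I ^ a • ⊤ : Submodule R M)] := by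
    intro n a b hab
    rw [SModEq.sub_mem]
    simp only [hSdef]
    rw [← Finset.sum_range_add_sum_Ico _ hab, sub_add_cancel_left]
    exact neg_mem <| Submodule.sum_mem _ fun k hk =>
      pow_smul_mem_pow_smul_top hr (Finset.mem_Ico.mp hk).1 _
  choose L hL using fun n => IsPrecomplete.prec inferInstance (hcauchy n)
  refine ⟨L, fun n => (IsHausdorff.eq_iff_smodEq (I := I)).mpr fun j => ?_⟩
  calc L n ≡ S n (j + 1) [SMOD (I ^ j • ⊤ : Submodule R M)] :=
        (hL n (j + 1)).symm.mono (Submodule.smul_mono_left (Ideal.pow_le_pow_right j.le_succ))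
    _ = y n + r • S (n + 1) j := hS n j
    _ ≡ y n + r • L (n + 1) [SMOD (I ^ j • ⊤ : Submodule R M)] :=
        SModEq.rfl.add ((hL (n + 1) j).smul r)

lemma LinearMap.eq_zero_of_isHausdorff {A S : Type*} [CommRing A] [Module A M] (f : A)
    [CommRing S] [Algebra A S] [IsLocalization.Away f S] [IsHausdorff (Ideal.span {f}) M]
    (φ : S →ₗ[A] M) : φ = 0 := by
  ext x
  refine (IsHausdorff.eq_iff_smodEq (I := Ideal.span {f})).mpr fun n => SModEq.zero.mpr ?_
  have hx : x = f ^ n • (IsLocalization.Away.invSelf f ^ n * x) := by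
    rw [Algebra.smul_def, ← mul_assoc, map_pow, ← mul_pow, IsLocalization.Away.mul_invSelf,
      one_pow, one_mul]
  rw [hx, map_smul]
  exact pow_smul_mem_pow_smul_top (Ideal.mem_span_singleton_self f) le_rfl _

end AdicSeries

section Telescope

variable {A : Type*} [CommRing A] (f : A)

noncomputable def telescope : (ℕ →₀ A) →ₗ[A] (ℕ →₀ A) :=
  LinearMap.id - f • Finsupp.lmapDomain A A (· + 1)

lemma telescope_single (n : ℕ) (a : A) :
    telescope f (Finsupp.single n a) = Finsupp.single n a - Finsupp.single (n + 1) (f * a) := by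
  simp [telescope, Finsupp.smul_single]

lemma telescope_apply_zero (x : ℕ →₀ A) : telescope f x 0 = x 0 := by
  simp [telescope, Finsupp.mapDomain_of_notMem_range (f := (· + 1)) x 0 (by simp)]

lemma telescope_apply_succ (x : ℕ →₀ A) (k : ℕ) :
    telescope f x (k + 1) = x (k + 1) - f * x k := by
  simp [telescope, Finsupp.mapDomain_apply (add_left_injective 1)]

lemma telescope_injective : Function.Injective (telescope f) := by
  refine (injective_iff_map_eq_zero _).mpr fun x hx => Finsupp.ext fun k => ?_
  induction k with
  | zero => simpa [telescope_apply_zero] using DFunLike.congr_fun hx 0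
  | succ k ih => simpa [telescope_apply_succ, ih] using DFunLike.congr_fun hx (k + 1)

lemma single_sub_single_mem_range_telescope (n j : ℕ) (a : A) :
    Finsupp.single n a - Finsupp.single (n + j) (f ^ j * a) ∈ LinearMap.range (telescope f) := by
  induction j with
  | zero => simp
  | succ j ih =>
    have hstep : Finsupp.single (n + j) (f ^ j * a) - Finsupp.single (n + (j + 1)) (f ^ (j + 1) * a)
        = telescope f (Finsupp.single (n + j) (f ^ j * a)) := by
      rw [telescope_single, pow_succ', mul_assoc, add_assoc]
    have := add_mem ih (hstep ▸ LinearMap.mem_range_self _ _)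
    rwa [sub_add_sub_cancel] at this

lemma exists_sub_single_mem_range_telescope (x : ℕ →₀ A) :
    ∃ K c, x - Finsupp.single K c ∈ LinearMap.range (telescope f) := by
  induction x using Finsupp.induction_linear with
  | zero => exact ⟨0, 0, by simp⟩
  | add x y hx hy =>
    obtain ⟨K, c, hc⟩ := hx
    obtain ⟨L, d, hd⟩ := hy
    refine ⟨K + L, f ^ L * c + f ^ K * d, ?_⟩
    have := add_mem (add_mem hc (single_sub_single_mem_range_telescope f K L c))
      (add_mem hd (single_sub_single_mem_range_telescope f L K d))
    convert this using 1
    rw [add_comm L K, Finsupp.single_add]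
    abel
  | single n a => exact ⟨n, a, by simp⟩

lemma exists_comp_telescope_eq {M : Type*} [AddCommGroup M] [Module A M]
    [IsAdicComplete (Ideal.span {f}) M] (φ : (ℕ →₀ A) →ₗ[A] M) :
    ∃ ψ : (ℕ →₀ A) →ₗ[A] M, ψ ∘ₗ telescope f = φ := by
  obtain ⟨L, hL⟩ := IsAdicComplete.exists_eq_add_smul_succ (Ideal.mem_span_singleton_self f)
    fun n => φ (Finsupp.single n 1)
  refine ⟨Finsupp.linearCombination A L, Finsupp.lhom_ext fun n a => ?_⟩
  rw [LinearMap.comp_apply, telescope_single, map_sub, Finsupp.linearCombination_single,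
    Finsupp.linearCombination_single, hL n, mul_comm f a, mul_smul, ← smul_sub,
    add_sub_cancel_right, ← map_smul, Finsupp.smul_single_one]

end Telescope

section InvPowSum

variable {A : Type*} [CommRing A] (f : A) (S : Type*) [CommRing S] [Algebra A S]
  [IsLocalization.Away f S]

open IsLocalization.Away in
noncomputable def invPowSum : (ℕ →₀ A) →ₗ[A] S :=
  Finsupp.lsum A fun n => LinearMap.toSpanSingleton A S (invSelf f ^ n)

variable {S}

lemma invPowSum_single (n : ℕ) (a : A) :
    invPowSum f S (Finsupp.single n a) = a • IsLocalization.Away.invSelf f ^ n := by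
  simp [invPowSum]

lemma invPowSum_telescope (x : ℕ →₀ A) : invPowSum f S (telescope f x) = 0 := by
  induction x using Finsupp.induction_linear with
  | zero => simp
  | add x y hx hy => rw [map_add, map_add, hx, hy, add_zero]
  | single n a =>
    rw [telescope_single, map_sub, invPowSum_single, invPowSum_single, sub_eq_zero]
    simp only [Algebra.smul_def, map_mul, pow_succ']
    linear_combination (-(algebraMap A S a * IsLocalization.Away.invSelf f ^ n)) *
      IsLocalization.Away.mul_invSelf (S := S) f

lemma invPowSum_surjective : Function.Surjective (invPowSum f S) := by
  intro z
  obtain ⟨n, a, h⟩ := IsLocalization.Away.surj f z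
  refine ⟨Finsupp.single n a, ?_⟩
  rw [invPowSum_single, Algebra.smul_def, ← h, mul_assoc, ← mul_pow,
    IsLocalization.Away.mul_invSelf, one_pow, mul_one]

lemma ker_invPowSum_le_range_telescope :
    LinearMap.ker (invPowSum f S) ≤ LinearMap.range (telescope f) := by
  intro x hx
  obtain ⟨K, c, hc⟩ := exists_sub_single_mem_range_telescope f x
  have hcK : c • IsLocalization.Away.invSelf f ^ K = (0 : S) := by
    obtain ⟨y, hy⟩ := hc
    have := congr_arg (invPowSum f S) hy
    rwa [invPowSum_telescope, map_sub, LinearMap.mem_ker.mp hx, zero_sub, eq_comm, neg_eq_zero,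
      invPowSum_single] at this
  have hc0 : algebraMap A S c = algebraMap A S 0 := by
    rw [map_zero]
    calc algebraMap A S c
        = algebraMap A S c * (algebraMap A S f * IsLocalization.Away.invSelf f) ^ K := by
          rw [IsLocalization.Away.mul_invSelf, one_pow, mul_one]
      _ = (c • IsLocalization.Away.invSelf f ^ K) * algebraMap A S f ^ K := by
          rw [Algebra.smul_def]; ring
      _ = 0 := by rw [hcK, zero_mul]
  obtain ⟨k, hk⟩ := IsLocalization.Away.exists_of_eq f hc0
  have := add_mem hc (single_sub_single_mem_range_telescope f K k c)
  rwa [hk, mul_zero, Finsupp.single_zero, sub_zero, sub_add_cancel] at this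

end InvPowSum

section Resolution

open Limits

universe u

variable {A : Type u} [CommRing A] (f : A)

noncomputable def telescopeComplexX : ℕ → ModuleCat.{u} A
  | 0 | 1 => ModuleCat.of A (ℕ →₀ A)
  | _ + 2 => ModuleCat.of A PUnit

instance (n : ℕ) : Projective (telescopeComplexX (A := A) n) := by
  rcases n with _ | _ | n <;> exact (IsProjective.iff_projective _).mp inferInstance

noncomputable def telescopeComplex : ChainComplex (ModuleCat.{u} A) ℕ :=
  ChainComplex.of telescopeComplexX
    (fun | 0 => ModuleCat.ofHom (telescope f) | _ + 1 => 0)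
    (fun | 0 => zero_comp | _ + 1 => zero_comp)

lemma telescopeComplex_d_one_zero :
    (telescopeComplex f).d 1 0 = ModuleCat.ofHom (telescope f) := by
  simp only [telescopeComplex, ChainComplex.of, ChainComplex.of.d]
  exact Category.id_comp _

variable (S : Type u) [CommRing S] [Algebra A S] [IsLocalization.Away f S]

noncomputable def telescopeResolution.π :
    telescopeComplex f ⟶ (ChainComplex.single₀ (ModuleCat.{u} A)).obj (ModuleCat.of A S) :=
  (ChainComplex.toSingle₀Equiv _ _).symm
    ⟨ModuleCat.ofHom (invPowSum f S), by
      rw [telescopeComplex_d_one_zero]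
      ext : 1
      exact LinearMap.ext (invPowSum_telescope f)⟩

lemma telescopeResolution_quasiIso : QuasiIso (telescopeResolution.π f S) where
  quasiIsoAt n := by
    rcases n with _ | _ | n
    · rw [ChainComplex.quasiIsoAt₀_iff, ShortComplex.quasiIso_iff_of_zeros' _ rfl rfl rfl]
      refine ⟨(ShortComplex.moduleCat_exact_iff _).mpr fun x hx => ?_,
        (ModuleCat.epi_iff_surjective _).mpr (invPowSum_surjective (S := S) f)⟩
      obtain ⟨y, hy⟩ := ker_invPowSum_le_range_telescope (S := S) f (x := x) hx
      refine ⟨y, ?_⟩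
      change (telescopeComplex f).d 1 0 y = x
      rw [telescopeComplex_d_one_zero]
      exact hy
    all_goals rw [quasiIsoAt_iff_exactAt' (hL := ChainComplex.exactAt_succ_single_obj ..)]
    · rw [HomologicalComplex.exactAt_iff' _ 2 1 0 (by simp) (by simp),
        ShortComplex.moduleCat_exact_iff]
      intro x (hx : (telescopeComplex f).d 1 0 x = 0)
      rw [telescopeComplex_d_one_zero] at hx
      exact ⟨0, by rw [map_zero]; exact (telescope_injective f (hx.trans (map_zero _).symm)).symm⟩
    · rw [HomologicalComplex.exactAt_iff' _ (n + 3) (n + 2) (n + 1) (by simp) (by simp)]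
      exact ShortComplex.exact_of_isZero_X₂ _
        (ModuleCat.isZero_of_subsingleton (ModuleCat.of A PUnit))

noncomputable def telescopeResolution : ProjectiveResolution (ModuleCat.of A S) where
  complex := telescopeComplex f
  projective n := inferInstanceAs (Projective (telescopeComplexX n))
  π := telescopeResolution.π f S
  quasiIso := telescopeResolution_quasiIso f S

lemma isZero_ext_one_of_isAdicComplete (M : Type u) [AddCommGroup M] [Module A M]
    [IsAdicComplete (Ideal.span {f}) M] :
    IsZero (((Ext A (ModuleCat.{u} A) 1).obj (Opposite.op (ModuleCat.of A S))).obj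
      (ModuleCat.of A M)) := by
  refine IsZero.of_iso ?_ ((telescopeResolution f S).isoExt 1 (ModuleCat.of A M))
  rw [← HomologicalComplex.exactAt_iff_isZero_homology,
    HomologicalComplex.exactAt_iff' _ 0 1 2 (by simp) (by simp), ShortComplex.moduleCat_exact_iff]
  intro φ _
  obtain ⟨ψ, hψ⟩ := exists_comp_telescope_eq f (φ : telescopeComplexX 0 ⟶ ModuleCat.of A M).hom
  refine ⟨ModuleCat.ofHom ψ, ModuleCat.hom_ext ?_⟩
  change ψ ∘ₗ ((telescopeComplex f).d 1 0).hom = _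
  rw [telescopeComplex_d_one_zero]
  exact hψ

end Resolution

theorem isAdicComplete_boundedTorsion_derivedComplete_general
    (A : Type) [CommRing A] (f : A) (M : Type) [AddCommGroup M] [Module A M]
    (hcomplete : IsAdicComplete (Ideal.span {f}) M) :
    DerivedFComplete A f M :=
  ⟨LinearMap.eq_zero_of_isHausdorff f,
    ModuleCat.subsingleton_of_isZero (isZero_ext_one_of_isAdicComplete f _ M)⟩

/-- If `M` is `f`-adically separated and complete
(`M ≅ lim_n M/fⁿM`) and has bounded `f`-power torsion, then `M` is derived `f`-complete. -/
theorem isAdicComplete_boundedTorsion_derivedComplete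
    (A : Type) [CommRing A] (f : A) (M : Type) [AddCommGroup M] [Module A M]
    (hcomplete : IsAdicComplete (Ideal.span {f}) M)
    (hbdd : ∃ N : ℕ, ∀ x : M, (∃ n : ℕ, f ^ n • x = 0) → f ^ N • x = 0) :
    DerivedFComplete A f M :=
  isAdicComplete_boundedTorsion_derivedComplete_general A f M hcomplete
end

section
/- Consider the ring A = Z_p[[X]] and the ring endomorphism φ : A → A determined by φ(X) = (1+X)^p − 1 (and φ acting as the identity on Z_p). Then A is a free module of rank p over the subring φ(A), with basis the elements (1+X)^i for 0 ≤ i ≤ p−1. -/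
/-!
Put `g = φ(X) = (1 + X)^p - 1`. Modulo `p` it is `X^p`, so Weierstrass division by `g` writes
every `f` uniquely as `g q + r` with `deg r < p`, i.e. with `r` a `ℤ_p`-combination of the
`(1 + X)^i`, `i < p`. Since `φ(f) ≡ ∑_{m < N} f_m g^m` modulo `g^N`, dividing again and again
by `g` produces `aᵢ` with `f ≡ ∑ φ(aᵢ) (1 + X)^i` modulo `g^N ⊆ (X^N)` for every `N`; and
uniqueness of the division of `0` kills the coefficients of a relation one at a time.
-/

open IsLocalRing PowerSeries

namespace PowerSeries

theorem ne_zero_of_order_eq_natCast {R : Type*} [Semiring R] {f : R⟦X⟧} {n : ℕ}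
    (h : f.order = n) : f ≠ 0 := by
  simp [← order_eq_top, h]

section Substitution

variable {R : Type*} [CommRing R] {φ : R⟦X⟧ →+* R⟦X⟧} {g : R⟦X⟧}

theorem map_eq_mul_map_shift_add_C (hC : ∀ a, φ (C a) = C a) (hX : φ X = g) (f : R⟦X⟧) :
    φ f = g * φ (mk fun k ↦ coeff (k + 1) f) + C (constantCoeff f) := by
  conv_lhs => rw [eq_X_mul_shift_add_const f]
  rw [map_add, map_mul, hX, hC]

theorem pow_dvd_map_sub_sum (hC : ∀ a, φ (C a) = C a) (hX : φ X = g) (N : ℕ) (f : R⟦X⟧) :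
    g ^ N ∣ φ f - ∑ m ∈ Finset.range N, C (coeff m f) * g ^ m := by
  induction N generalizing f with
  | zero => simp
  | succ N ih =>
    obtain ⟨h, hh⟩ := ih (mk fun k ↦ coeff (k + 1) f)
    refine ⟨h, ?_⟩
    simp only [coeff_mk] at hh
    rw [Finset.sum_range_succ', map_eq_mul_map_shift_add_C hC hX f, coeff_zero_eq_constantCoeff]
    simp only [pow_succ', mul_left_comm _ g, ← Finset.mul_sum]
    linear_combination g * hh

theorem eq_zero_of_forall_X_pow_dvd {f : R⟦X⟧} (h : ∀ N, X ^ N ∣ f) : f = 0 :=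
  ext fun k ↦ X_pow_dvd_iff.1 (h (k + 1)) k k.lt_succ_self

theorem X_dvd_one_add_X_pow_sub_one (n : ℕ) : (X : R⟦X⟧) ∣ (1 + X) ^ n - 1 := by
  simp [X_dvd_iff]

end Substitution

section WeierstrassDigits

variable {A : Type*} [CommRing A] {n : ℕ} (B : Module.Basis (Fin n) A (Polynomial.degreeLT A n))

theorem sum_C_mul_basis_eq (c : Fin n → A) :
    ∑ i, C (c i) * ((B i : Polynomial A) : A⟦X⟧) =
      ((B.equivFun.symm c : Polynomial A) : A⟦X⟧) := by
  rw [B.equivFun_symm_apply, Submodule.coe_sum, ← Polynomial.coeToPowerSeries.ringHom_apply,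
    map_sum]
  simp [Polynomial.smul_eq_C_mul, Polynomial.coeToPowerSeries.ringHom_apply]

variable [IsLocalRing A] [IsAdicComplete (maximalIdeal A) A] {g : A⟦X⟧}

theorem weierstrassMod_mem_degreeLT (hg : (g.map (residue A)).order = n) (f : A⟦X⟧) :
    f %ʷ g ∈ Polynomial.degreeLT A n := by
  simpa [Polynomial.mem_degreeLT, hg] using degree_weierstrassMod_lt f g

noncomputable def weierstrassDigits (hg : (g.map (residue A)).order = n) (f : A⟦X⟧) :
    Fin n → A :=
  B.repr ⟨f %ʷ g, weierstrassMod_mem_degreeLT hg f⟩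

theorem eq_mul_weierstrassDiv_add_sum_weierstrassDigits (hg : (g.map (residue A)).order = n)
    (f : A⟦X⟧) :
    f = g * (f /ʷ g) + ∑ i, C (weierstrassDigits B hg f i) * ((B i : Polynomial A) : A⟦X⟧) := by
  rw [sum_C_mul_basis_eq, weierstrassDigits, ← B.equivFun_apply, LinearEquiv.symm_apply_apply]
  exact eq_mul_weierstrassDiv_add_weierstrassMod f (ne_zero_of_order_eq_natCast hg)

theorem eq_zero_of_mul_add_sum_eq_zero (hg : (g.map (residue A)).order = n) {q : A⟦X⟧}
    {c : Fin n → A} (h : g * q + ∑ i, C (c i) * ((B i : Polynomial A) : A⟦X⟧) = 0) :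
    q = 0 ∧ c = 0 := by
  rw [sum_C_mul_basis_eq] at h
  have hdiv : IsWeierstrassDivision 0 g q (B.equivFun.symm c) := by
    refine ⟨?_, h.symm⟩
    rw [show (g.map (Ideal.Quotient.mk (maximalIdeal A))).order = n from hg, ENat.toNat_natCast,
      ← Polynomial.mem_degreeLT]
    exact (B.equivFun.symm c).2
  obtain ⟨rfl, hr⟩ := hdiv.eq_zero (ne_zero_of_order_eq_natCast hg)
  exact ⟨rfl, B.equivFun.symm.map_eq_zero_iff.1 (Subtype.ext hr)⟩

theorem eq_sum_pow_mul_add_pow_mul_iterate (hg : (g.map (residue A)).order = n) (f : A⟦X⟧)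
    (N : ℕ) :
    f = ∑ m ∈ Finset.range N, g ^ m * ∑ i, C (weierstrassDigits B hg ((· /ʷ g)^[m] f) i) *
        ((B i : Polynomial A) : A⟦X⟧) + g ^ N * (· /ʷ g)^[N] f := by
  induction N with
  | zero => simp
  | succ N ih =>
    have hN := eq_mul_weierstrassDiv_add_sum_weierstrassDigits B hg ((· /ʷ g)^[N] f)
    rw [Finset.sum_range_succ, Function.iterate_succ_apply']
    linear_combination ih + g ^ N * hN

end WeierstrassDigits

section Frobenius

variable {A : Type*} [CommRing A] {φ : A⟦X⟧ →+* A⟦X⟧} {g : A⟦X⟧} {n : ℕ}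
  (B : Module.Basis (Fin n) A (Polynomial.degreeLT A n))

theorem sum_map_mul_basis_eq (hC : ∀ a, φ (C a) = C a) (hX : φ X = g) (a : Fin n → A⟦X⟧) :
    ∑ i, φ (a i) * ((B i : Polynomial A) : A⟦X⟧) =
      g * ∑ i, φ (mk fun k ↦ coeff (k + 1) (a i)) * ((B i : Polynomial A) : A⟦X⟧) +
        ∑ i, C (constantCoeff (a i)) * ((B i : Polynomial A) : A⟦X⟧) := by
  simp only [map_eq_mul_map_shift_add_C hC hX (a _), add_mul, Finset.sum_add_distrib,
    Finset.mul_sum, mul_assoc]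

variable [IsLocalRing A] [IsAdicComplete (maximalIdeal A) A]

theorem eq_zero_of_sum_map_mul_basis_eq_zero (hg : (g.map (residue A)).order = n)
    (hC : ∀ a, φ (C a) = C a) (hX : φ X = g) {a : Fin n → A⟦X⟧}
    (h : ∑ i, φ (a i) * ((B i : Polynomial A) : A⟦X⟧) = 0) : a = 0 := by
  suffices ∀ k (a : Fin n → A⟦X⟧), ∑ i, φ (a i) * ((B i : Polynomial A) : A⟦X⟧) = 0 →
      ∀ i, coeff k (a i) = 0 from
    funext fun i ↦ ext fun k ↦ this k a h i
  intro k
  induction k with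
  | zero =>
    intro a h i
    rw [sum_map_mul_basis_eq B hC hX] at h
    simpa using congrFun (eq_zero_of_mul_add_sum_eq_zero B hg h).2 i
  | succ k ih =>
    intro a h i
    rw [sum_map_mul_basis_eq B hC hX] at h
    simpa using ih _ (eq_zero_of_mul_add_sum_eq_zero B hg h).1 i

theorem exists_eq_sum_map_mul_basis (hg : (g.map (residue A)).order = n) (hgX : X ∣ g)
    (hC : ∀ a, φ (C a) = C a) (hX : φ X = g) (f : A⟦X⟧) :
    ∃ a : Fin n → A⟦X⟧, f = ∑ i, φ (a i) * ((B i : Polynomial A) : A⟦X⟧) := by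
  set d : ℕ → Fin n → A := fun m ↦ weierstrassDigits B hg ((· /ʷ g)^[m] f)
  refine ⟨fun i ↦ mk fun m ↦ d m i, eq_of_sub_eq_zero (eq_zero_of_forall_X_pow_dvd fun N ↦ ?_)⟩
  refine (pow_dvd_pow_of_dvd hgX N).trans ?_
  have hf := eq_sum_pow_mul_add_pow_mul_iterate B hg f N
  have hswap : ∑ m ∈ Finset.range N, g ^ m * ∑ i, C (d m i) * ((B i : Polynomial A) : A⟦X⟧) =
      ∑ i, (∑ m ∈ Finset.range N, C (d m i) * g ^ m) * ((B i : Polynomial A) : A⟦X⟧) := by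
    simp only [Finset.mul_sum, Finset.sum_mul]
    rw [Finset.sum_comm]
    ring_nf
  have hsplit : f - ∑ i, φ (mk fun m ↦ d m i) * ((B i : Polynomial A) : A⟦X⟧) =
      g ^ N * (· /ʷ g)^[N] f - ∑ i, (φ (mk fun m ↦ d m i) -
        ∑ m ∈ Finset.range N, C (d m i) * g ^ m) * ((B i : Polynomial A) : A⟦X⟧) := by
    simp only [sub_mul, Finset.sum_sub_distrib]
    linear_combination hf + hswap
  rw [hsplit]
  refine dvd_sub (dvd_mul_right _ _) (Finset.dvd_sum fun i _ ↦ Dvd.dvd.mul_right ?_ _)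
  simpa only [coeff_mk] using pow_dvd_map_sub_sum hC hX N (mk fun m ↦ d m i)

end Frobenius

theorem coe_degreeLT_basis_map_taylorLinearEquiv_one {R : Type*} [CommRing R] (n : ℕ)
    (i : Fin n) :
    ((((Polynomial.degreeLT.basis R n).map (Polynomial.taylorLinearEquiv 1 n)) i :
      Polynomial R) : R⟦X⟧) = (1 + X) ^ (i : ℕ) := by
  change ((Polynomial.taylor 1 (Polynomial.degreeLT.basis R n i) : Polynomial R) : R⟦X⟧) = _
  rw [Polynomial.degreeLT.basis_val, Polynomial.taylor_X_pow]
  simp [add_comm]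

end PowerSeries

theorem RingHom.exists_basis_range {R S ι : Type*} [CommRing R] [CommRing S] [Fintype ι]
    (φ : R →+* S) (b : ι → S)
    (hindep : ∀ a : ι → R, ∑ i, φ (a i) * b i = 0 → ∀ i, φ (a i) = 0)
    (hspan : ∀ s, ∃ a : ι → R, s = ∑ i, φ (a i) * b i) :
    letI : Algebra φ.range S := φ.range.subtype.toAlgebra
    ∃ B : Module.Basis ι φ.range S, ∀ i, B i = b i := by
  let : Algebra φ.range S := φ.range.subtype.toAlgebra
  have hli : LinearIndependent φ.range b := by
    rw [Fintype.linearIndependent_iff]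
    intro c hc i
    choose a ha using fun j ↦ (c j).2
    refine Subtype.ext ?_
    rw [← ha i]
    refine hindep a ?_ i
    simpa only [Algebra.smul_def, RingHom.algebraMap_toAlgebra, Subring.coe_subtype, ha] using hc
  have hsp : ⊤ ≤ Submodule.span φ.range (Set.range b) := by
    rintro s -
    obtain ⟨a, rfl⟩ := hspan s
    exact Submodule.sum_mem _ fun i _ ↦
      Submodule.smul_mem _ (⟨φ (a i), a i, rfl⟩ : φ.range) (Submodule.subset_span ⟨i, rfl⟩)
  exact ⟨.mk hli hsp, Module.Basis.mk_apply hli hsp⟩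

theorem PadicInt.order_map_residue_one_add_X_pow_sub_one (p : ℕ) [hp : Fact p.Prime] :
    (((1 + X : ℤ_[p]⟦X⟧) ^ p - 1).map (residue ℤ_[p])).order = p := by
  have : CharP (ResidueField ℤ_[p])⟦X⟧ p := by
    refine (CharP.charP_iff_prime_eq_zero hp.out).2 ?_
    rw [← map_natCast C, ← map_natCast (residue ℤ_[p]), (residue_eq_zero_iff _).2, map_zero]
    rw [PadicInt.maximalIdeal_eq_span_p]
    exact Ideal.mem_span_singleton_self _
  rw [map_sub, map_pow, map_add, map_one, map_X, add_pow_char, one_pow, add_sub_cancel_left,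
    order_X_pow]

theorem powerSeries_free_over_frobenius_general (p : ℕ) [Fact p.Prime]
    (φ : PowerSeries ℤ_[p] →+* PowerSeries ℤ_[p])
    (hC : ∀ c : ℤ_[p], φ (PowerSeries.C c) = PowerSeries.C c)
    (hX : φ PowerSeries.X = (1 + PowerSeries.X) ^ p - 1) :
    letI : Algebra φ.range (PowerSeries ℤ_[p]) := φ.range.subtype.toAlgebra
    ∃ b : Module.Basis (Fin p) φ.range (PowerSeries ℤ_[p]),
      ∀ i : Fin p, b i = (1 + PowerSeries.X) ^ (i : ℕ) := by
  let B := (Polynomial.degreeLT.basis ℤ_[p] p).map (Polynomial.taylorLinearEquiv 1 p)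
  have hg := PadicInt.order_map_residue_one_add_X_pow_sub_one p
  obtain ⟨b, hb⟩ := φ.exists_basis_range (fun i ↦ ((B i : Polynomial ℤ_[p]) : ℤ_[p]⟦X⟧))
    (fun a ha i ↦ by rw [eq_zero_of_sum_map_mul_basis_eq_zero B hg hC hX ha, Pi.zero_apply,
      map_zero])
    (exists_eq_sum_map_mul_basis B hg (X_dvd_one_add_X_pow_sub_one p) hC hX)
  exact ⟨b, fun i ↦ (hb i).trans (coe_degreeLT_basis_map_taylorLinearEquiv_one p i)⟩

/-- Let `A = ℤ_p[[X]]` and let `φ` be the continuous `ℤ_p`-algebra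
endomorphism of `A` determined by `φ(X) = (1+X)^p − 1` (continuity is with respect to
the `(p, X)`-adic topology).  Then `A` is a free module of rank `p` over the subring
`φ(A)`, with basis `(1+X)^i` for `0 ≤ i ≤ p−1`. -/
theorem powerSeries_free_over_frobenius (p : ℕ) [Fact p.Prime]
    (φ : PowerSeries ℤ_[p] →+* PowerSeries ℤ_[p])
    (hC : ∀ c : ℤ_[p], φ (PowerSeries.C c) = PowerSeries.C c)
    (hX : φ PowerSeries.X = (1 + PowerSeries.X) ^ p - 1)
    (hcont : @Continuous _ _
      ((Ideal.span {(p : PowerSeries ℤ_[p]), PowerSeries.X}).adicTopology)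
      ((Ideal.span {(p : PowerSeries ℤ_[p]), PowerSeries.X}).adicTopology) φ) :
    letI : Algebra φ.range (PowerSeries ℤ_[p]) := φ.range.subtype.toAlgebra
    ∃ b : Module.Basis (Fin p) φ.range (PowerSeries ℤ_[p]),
      ∀ i : Fin p, b i = (1 + PowerSeries.X) ^ (i : ℕ) :=
  powerSeries_free_over_frobenius_general p φ hC hX
end
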